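/- arXiv:2507.09235 — 5 statements merged into one kernel-verified Lean document; each statement's English description precedes it below -/
import Mathlib

section
/- Let m ≥ 3 be a natural number, let A be a finite set with a strict linear order <, and let B be a weakly (m−1)-wise balanced design over A. Then the graph Γ_{B,m} contains no clique of size m (it is K_m-free). -/
open Finset

/-- `B` is a weakly `m`-wise balanced design over the finite set `A`:
every block is a nonempty subset of `A`, every point of `A` lies in at least
one block, and any `m` pairwise distinct points of `A` are contained together
in at most one block. -/
def IsWeaklyBalancedDesign {α : Type*} [DecidableEq α] (m : ℕ)
    (A : Finset α) (B : Finset (Finset α)) : Prop :=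
  (∀ C ∈ B, C ⊆ A) ∧
  (∀ C ∈ B, C.Nonempty) ∧
  (∀ x ∈ A, ∃ C ∈ B, x ∈ C) ∧
  (∀ S : Finset α, S ⊆ A → S.card = m → (B.filter fun C => S ⊆ C).card ≤ 1)

/-- The vertex set of `Γ_{B,m}`: all incidence pairs `(x, C)` with `x ∈ C ∈ B`. -/
def designVerts {α : Type*} [DecidableEq α] (B : Finset (Finset α)) :
    Finset (α × Finset α) :=
  B.biUnion fun C => C.image fun x => (x, C)

/-- The graph `Γ_{B,m}` on incidence pairs: `(x, C₁)` and `(y, C₂)` are adjacent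
iff `x < y`, `C₁ ≠ C₂` and `x ∈ C₂`, or symmetrically `y < x`, `C₂ ≠ C₁` and `y ∈ C₁`. -/
def designGraph {α : Type*} [inst : LinearOrder α] (B : Finset (Finset α)) :
    SimpleGraph (designVerts (α := α) B) where
  Adj u v :=
    (u.val.1 < v.val.1 ∧ u.val.2 ≠ v.val.2 ∧ u.val.1 ∈ v.val.2) ∨
    (v.val.1 < u.val.1 ∧ v.val.2 ≠ u.val.2 ∧ v.val.1 ∈ u.val.2)
  symm := ⟨fun u v h => by tauto⟩
  loopless := ⟨fun u h => by
    rcases h with ⟨h, _, _⟩ | ⟨h, _, _⟩ <;> exact lt_irrefl _ h⟩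

/-- The independence number of a graph: the largest size of an independent set of vertices. -/
noncomputable def indepNum {V : Type*} (G : SimpleGraph V) : ℕ :=
  sSup {n | ∃ s : Finset V, s.card = n ∧ ∀ x ∈ s, ∀ y ∈ s, ¬ G.Adj x y}

/-! The points of an `m`-clique are pairwise distinct, and every point of the clique lies in the
block of each clique vertex with a larger point. So the `m - 1` smallest points lie both in the
block of the vertex with the largest point and in the block of the vertex with the second largest
point, and these two blocks differ because the two vertices are adjacent. -/

theorem IsWeaklyBalancedDesign.eq_of_subset_of_subset {α : Type*} [DecidableEq α] {k : ℕ}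
    {A : Finset α} {B : Finset (Finset α)} (hB : IsWeaklyBalancedDesign k A B) {S C₁ C₂ : Finset α}
    (hS : S.card = k) (hC₁ : C₁ ∈ B) (hC₂ : C₂ ∈ B) (hS₁ : S ⊆ C₁) (hS₂ : S ⊆ C₂) : C₁ = C₂ :=
  card_le_one.mp (hB.2.2.2 S (hS₁.trans (hB.1 C₁ hC₁)) hS) _ (mem_filter.mpr ⟨hC₁, hS₁⟩) _
    (mem_filter.mpr ⟨hC₂, hS₂⟩)

theorem mem_designVerts {α : Type*} [DecidableEq α] {B : Finset (Finset α)} {p : α × Finset α} :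
    p ∈ designVerts B ↔ p.2 ∈ B ∧ p.1 ∈ p.2 := by
  simp only [designVerts, mem_biUnion, mem_image]
  constructor
  · rintro ⟨C, hC, x, hx, rfl⟩
    exact ⟨hC, hx⟩
  · exact fun ⟨hC, hx⟩ => ⟨p.2, hC, p.1, hx, rfl⟩

section designGraph

variable {α : Type*} [LinearOrder α] {B : Finset (Finset α)}

theorem designGraph_fst_ne_of_adj {u v : designVerts B} (h : (designGraph B).Adj u v) :
    u.val.1 ≠ v.val.1 := by
  rcases h with ⟨h, -, -⟩ | ⟨h, -, -⟩
  exacts [h.ne, h.ne']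

theorem designGraph_mem_and_ne_of_adj_of_le {u v : designVerts B} (h : (designGraph B).Adj u v)
    (hle : u.val.1 ≤ v.val.1) : u.val.1 ∈ v.val.2 ∧ u.val.2 ≠ v.val.2 := by
  rcases h with ⟨-, hne, hmem⟩ | ⟨hlt, -, -⟩
  exacts [⟨hmem, hne⟩, absurd hle hlt.not_ge]

theorem injOn_fst_of_isClique_designGraph {s : Finset (designVerts B)}
    (hs : (designGraph B).IsClique (s : Set (designVerts B))) :
    Set.InjOn (fun v : designVerts B => v.val.1) s := fun _ hu _ hv huv =>
  by_contra fun hne => designGraph_fst_ne_of_adj (hs hu hv hne) huv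

theorem image_fst_subset_of_isClique_designGraph {s : Finset (designVerts B)}
    (hs : (designGraph B).IsClique (s : Set (designVerts B))) {v : designVerts B} (hv : v ∈ s)
    (hmax : ∀ u ∈ s, u.val.1 ≤ v.val.1) : s.image (fun u => u.val.1) ⊆ v.val.2 := by
  simp only [subset_iff, mem_image]
  rintro _ ⟨u, hu, rfl⟩
  obtain rfl | huv := eq_or_ne u v
  · exact (mem_designVerts.mp u.property).2
  · exact (designGraph_mem_and_ne_of_adj_of_le (hs hu hv huv) (hmax u hu)).1

end designGraph

/-- Let `m ≥ 3`, let `A` be a finite set with a strict linear order and let `B` be a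
weakly `(m-1)`-wise balanced design over `A`. Then `Γ_{B,m}` contains no clique of size `m`. -/
theorem designGraph_cliqueFree {α : Type*} [LinearOrder α] (m : ℕ) (hm : 3 ≤ m)
    (A : Finset α) (B : Finset (Finset α))
    (hB : IsWeaklyBalancedDesign (m - 1) A B) :
    (designGraph B).CliqueFree m := by
  rintro s ⟨hs, hcard⟩
  obtain ⟨v, hv, hvmax⟩ := s.exists_max_image (fun u => u.val.1) (card_pos.mp (by omega))
  set s' := s.erase v
  have hs' : (designGraph B).IsClique (s' : Set (designVerts B)) :=
    hs.subset (coe_subset.mpr (erase_subset v s))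
  have hcard' : s'.card = m - 1 := by rw [card_erase_of_mem hv, hcard]
  obtain ⟨w, hw, hwmax⟩ := s'.exists_max_image (fun u => u.val.1) (card_pos.mp (by omega))
  set S := s'.image fun u => u.val.1
  have hS : S.card = m - 1 := by
    rw [card_image_of_injOn (injOn_fst_of_isClique_designGraph hs'), hcard']
  have hSv : S ⊆ v.val.2 := (image_subset_image (erase_subset v s)).trans
    (image_fst_subset_of_isClique_designGraph hs hv hvmax)
  have hSw : S ⊆ w.val.2 := image_fst_subset_of_isClique_designGraph hs' hw hwmax
  have hwv := designGraph_mem_and_ne_of_adj_of_le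
    (hs (mem_of_mem_erase hw) hv (ne_of_mem_erase hw)) (hvmax w (mem_of_mem_erase hw))
  exact hwv.2 (hB.eq_of_subset_of_subset hS (mem_designVerts.mp w.property).1
    (mem_designVerts.mp v.property).1 hSw hSv)
end

section
/- Let m ≥ 3 be a natural number, let A be a finite set with a strict linear order <, let B be a weakly (m−1)-wise balanced design over A, and suppose |A| ≤ k·|B| for some real k > 0. Then (|A| + |B|) / (k + 1) ≤ α(Γ_{B,m}). -/
open Finset

/-!
The incidence pairs `(min C, C)`, one per block, are pairwise non-adjacent in `Γ_{B,m}`: an edge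
between `(min C₁, C₁)` and `(min C₂, C₂)` would need `min C₁ < min C₂` with `min C₁ ∈ C₂`.
Hence `α(Γ_{B,m}) ≥ |B|`, and `|A| + |B| ≤ (k + 1)|B|` finishes the bound.
-/

theorem card_le_indepNum {V : Type*} [Fintype V] {G : SimpleGraph V} {s : Finset V}
    (hs : ∀ x ∈ s, ∀ y ∈ s, ¬ G.Adj x y) : s.card ≤ indepNum G :=
  le_csSup ⟨Fintype.card V, fun _ ⟨t, ht, _⟩ => ht ▸ t.card_le_univ⟩ ⟨s, rfl, hs⟩

section

variable {α : Type*} [LinearOrder α] {B : Finset (Finset α)}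

def minVert (hne : ∀ C ∈ B, C.Nonempty) (C : B) : designVerts B :=
  ⟨(C.1.min' (hne _ C.2), C.1), mem_biUnion.2 ⟨C.1, C.2, mem_image_of_mem _ (min'_mem _ _)⟩⟩

theorem minVert_injective (hne : ∀ C ∈ B, C.Nonempty) : Function.Injective (minVert hne) :=
  fun _ _ h => Subtype.ext (congrArg (fun v => v.1.2) h)

theorem not_adj_minVert (hne : ∀ C ∈ B, C.Nonempty) (C D : B) :
    ¬ (designGraph B).Adj (minVert hne C) (minVert hne D) := by
  rintro (⟨hlt, -, hmem⟩ | ⟨hlt, -, hmem⟩) <;> exact (min'_le _ _ hmem).not_gt hlt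

theorem card_le_indepNum_designGraph (hne : ∀ C ∈ B, C.Nonempty) :
    B.card ≤ indepNum (designGraph B) := by
  classical
  calc B.card = (univ.image (minVert hne)).card := by
        rw [card_image_of_injective _ (minVert_injective hne), card_univ, Fintype.card_coe]
    _ ≤ indepNum (designGraph B) := card_le_indepNum <| by
        simp only [mem_image, mem_univ, true_and]
        rintro _ ⟨C, rfl⟩ _ ⟨D, rfl⟩
        exact not_adj_minVert hne C D

end

theorem designGraph_indepNum_lower_general {α : Type*} [LinearOrder α] (m : ℕ)
    (A : Finset α) (B : Finset (Finset α))
    (hB : IsWeaklyBalancedDesign (m - 1) A B)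
    (k : ℝ) (hk : 0 < k) (hAB : (A.card : ℝ) ≤ k * (B.card : ℝ)) :
    ((A.card : ℝ) + (B.card : ℝ)) / (k + 1) ≤ (indepNum (designGraph B) : ℝ) := by
  have hBα : (B.card : ℝ) ≤ indepNum (designGraph B) := by
    exact_mod_cast card_le_indepNum_designGraph hB.2.1
  rw [div_le_iff₀ (by linarith)]
  calc (A.card : ℝ) + B.card ≤ B.card * (k + 1) := by linarith
    _ ≤ indepNum (designGraph B) * (k + 1) := by gcongr

/-- Let `m ≥ 3`, let `B` be a weakly `(m-1)`-wise balanced design over a finite linearly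
ordered set `A`, and suppose `|A| ≤ k·|B|` for some real `k > 0`.
Then `(|A| + |B|) / (k + 1) ≤ α(Γ_{B,m})`. -/
theorem designGraph_indepNum_lower {α : Type*} [LinearOrder α] (m : ℕ) (hm : 3 ≤ m)
    (A : Finset α) (B : Finset (Finset α))
    (hB : IsWeaklyBalancedDesign (m - 1) A B)
    (k : ℝ) (hk : 0 < k) (hAB : (A.card : ℝ) ≤ k * (B.card : ℝ)) :
    ((A.card : ℝ) + (B.card : ℝ)) / (k + 1) ≤ (indepNum (designGraph B) : ℝ) :=
  designGraph_indepNum_lower_general m A B hB k hk hAB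
end

section
/- Let a, b be natural numbers and let S : Fin a → Finset (Fin b) be a family of row-sets of an a × b grid (S i is the set of colored cells in row i) such that the grid contains no axis-aligned rectangle, i.e., for any two distinct rows i ≠ j, |S i ∩ S j| ≤ 1. Then Σ_{i=1}^{a} C(|S i|, 2) ≤ C(b, 2), where C(·,2) denotes the binomial coefficient 'choose 2'. Consequently, b² − b ≥ Σ_{i=1}^{a} |S i|² − Σ_{i=1}^{a} |S i|. -/
open Finset

/-
Every pair of colored cells in a row is a 2-subset of the columns, and since two rows share at
most one colored column, no 2-subset arises from two different rows. Hence the rows contribute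
pairwise disjoint families of 2-subsets of the `b` columns, and counting gives
`∑ i, C(|S i|, 2) ≤ C(b, 2)`. The second inequality is the first multiplied by two, via
`n² - n = 2 C(n, 2)`.
-/

theorem Nat.two_mul_cast_choose_two {R : Type*} [CommRing R] (n : ℕ) :
    2 * (n.choose 2 : R) = (n : R) ^ 2 - n := by
  induction n with
  | zero => simp
  | succ n ih =>
    rw [Nat.choose_succ_succ, Nat.choose_one_right]
    push_cast
    linear_combination ih

namespace Finset

variable {ι α : Type*} [DecidableEq α]

theorem disjoint_powersetCard_of_card_inter_lt {s t : Finset α} {k : ℕ} (h : #(s ∩ t) < k) :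
    Disjoint (s.powersetCard k) (t.powersetCard k) := by
  refine disjoint_left.2 fun u hus hut => ?_
  rw [mem_powersetCard] at hus hut
  have : #u ≤ #(s ∩ t) := card_le_card (subset_inter hus.1 hut.1)
  omega

theorem sum_choose_card_le_of_pairwise_card_inter_lt [Fintype α] (s : Finset ι) (S : ι → Finset α)
    {k : ℕ} (h : (s : Set ι).Pairwise fun i j => #(S i ∩ S j) < k) :
    ∑ i ∈ s, (#(S i)).choose k ≤ (Fintype.card α).choose k := by
  have hdisj : (s : Set ι).PairwiseDisjoint fun i => (S i).powersetCard k :=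
    h.mono' fun _ _ => disjoint_powersetCard_of_card_inter_lt
  calc ∑ i ∈ s, (#(S i)).choose k
      = #(s.biUnion fun i => (S i).powersetCard k) := by
        simp only [card_biUnion hdisj, card_powersetCard]
    _ ≤ #((univ : Finset α).powersetCard k) :=
        card_le_card fun u hu => by
          obtain ⟨i, -, hu⟩ := mem_biUnion.1 hu
          exact mem_powersetCard.2 ⟨subset_univ u, (mem_powersetCard.1 hu).2⟩
    _ = (Fintype.card α).choose k := by rw [card_powersetCard, card_univ]

end Finset

/-- Consider an `a × b` grid of cells, where `S i` is the set of colored cells in row `i`,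
containing no axis-aligned rectangle: any two distinct rows share at most one colored column.
Then `∑ i, C(|S i|, 2) ≤ C(b, 2)`, and consequently `b² - b ≥ ∑ i, |S i|² - ∑ i, |S i|`. -/
theorem rectangle_free_grid_bound (a b : ℕ) (S : Fin a → Finset (Fin b))
    (h : ∀ i j : Fin a, i ≠ j → ((S i) ∩ (S j)).card ≤ 1) :
    (∑ i, ((S i).card.choose 2)) ≤ b.choose 2 ∧
      (∑ i, ((S i).card : ℤ) ^ 2) - (∑ i, ((S i).card : ℤ)) ≤ (b : ℤ) ^ 2 - (b : ℤ) := by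
  have hpairs : ∑ i, (S i).card.choose 2 ≤ b.choose 2 := by
    simpa using sum_choose_card_le_of_pairwise_card_inter_lt univ S
      (k := 2) fun i _ j _ hij => Nat.lt_succ_of_le (h i j hij)
  refine ⟨hpairs, ?_⟩
  simp_rw [← sum_sub_distrib, ← Nat.two_mul_cast_choose_two, ← mul_sum]
  gcongr
  exact_mod_cast hpairs
end

section
/- Let B be a weakly 2-wise balanced design over a finite set A, let a = |A|, b = |B|, and let n = Σ_{C ∈ B} |C| be the number of incidence pairs. Then n² ≤ a·(b² − b + n), i.e., n² − a·n − a·(b² − b) ≤ 0; equivalently a ≥ n² / (b² − b + n). -/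
open Finset

/-!
Let `r x` be the number of blocks through the point `x`. Counting incidences point by point gives
`n = ∑ r x`. Two distinct blocks share at most one point, so counting ordered pairs of distinct
blocks through a common point gives `∑ r x (r x - 1) ≤ b (b - 1)`. Cauchy–Schwarz,
`n² = (∑ r x)² ≤ a ∑ r x²`, then yields `n² ≤ a (b² - b + n)`.
-/

def replicationNumber {α : Type*} [DecidableEq α] (B : Finset (Finset α)) (x : α) : ℕ :=
  #{C ∈ B | x ∈ C}

section Counting

variable {α : Type*} [DecidableEq α] {A : Finset α} {B : Finset (Finset α)}

theorem sum_card_eq_sum_replicationNumber (hBA : ∀ C ∈ B, C ⊆ A) :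
    ∑ C ∈ B, #C = ∑ x ∈ A, replicationNumber B x :=
  calc ∑ C ∈ B, #C = ∑ C ∈ B, #(A.bipartiteBelow (· ∈ ·) C) :=
        sum_congr rfl fun C hC => by
          rw [bipartiteBelow, filter_mem_eq_inter, inter_eq_right.2 (hBA C hC)]
    _ = ∑ x ∈ A, replicationNumber B x :=
        (sum_card_bipartiteAbove_eq_sum_card_bipartiteBelow _).symm

theorem IsWeaklyBalancedDesign.card_inter_le_one (hB : IsWeaklyBalancedDesign 2 A B)
    {C₁ C₂ : Finset α} (hC₁ : C₁ ∈ B) (hC₂ : C₂ ∈ B) (hne : C₁ ≠ C₂) : #(C₁ ∩ C₂) ≤ 1 := by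
  refine card_le_one.2 fun x hx y hy => by_contra fun hxy => hne ?_
  rw [mem_inter] at hx hy
  have hxyA : {x, y} ⊆ A :=
    insert_subset_iff.2 ⟨hB.1 C₁ hC₁ hx.1, singleton_subset_iff.2 (hB.1 C₁ hC₁ hy.1)⟩
  refine card_le_one.1 (hB.2.2.2 {x, y} hxyA (card_pair hxy)) _ ?_ _ ?_ <;>
    simp only [mem_filter, insert_subset_iff, singleton_subset_iff] <;> tauto

theorem sum_card_offDiag_filter_mem_le (A : Finset α)
    (hinter : ∀ C₁ ∈ B, ∀ C₂ ∈ B, C₁ ≠ C₂ → #(C₁ ∩ C₂) ≤ 1) :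
    ∑ x ∈ A, #{C ∈ B | x ∈ C}.offDiag ≤ #B.offDiag := by
  let r : α → Finset α × Finset α → Prop := fun x p => x ∈ p.1 ∧ x ∈ p.2
  have hoffDiag (x : α) : {C ∈ B | x ∈ C}.offDiag = B.offDiag.bipartiteAbove r x := by
    ext p
    simp only [mem_offDiag, mem_filter, mem_bipartiteAbove, r]
    tauto
  calc ∑ x ∈ A, #{C ∈ B | x ∈ C}.offDiag
      = ∑ p ∈ B.offDiag, #(A.bipartiteBelow r p) := by
        simp_rw [hoffDiag]
        exact sum_card_bipartiteAbove_eq_sum_card_bipartiteBelow r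
    _ ≤ ∑ _p ∈ B.offDiag, 1 := sum_le_sum fun p hp => by
        obtain ⟨hp₁, hp₂, hne⟩ := mem_offDiag.1 hp
        refine (card_le_card fun x hx => ?_).trans (hinter _ hp₁ _ hp₂ hne)
        exact mem_inter.2 ((mem_bipartiteBelow r).1 hx).2
    _ = #B.offDiag := by rw [sum_const, smul_eq_mul, mul_one]

end Counting

theorem Finset.natCast_card_offDiag {α R : Type*} [DecidableEq α] [Ring R] (s : Finset α) :
    (#s.offDiag : R) = (#s : R) ^ 2 - #s := by
  rw [offDiag_card, Nat.cast_sub (Nat.le_mul_self _), Nat.cast_mul, sq]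

theorem sq_sum_le_card_mul_of_sum_sq_sub_le {ι R : Type*} [CommRing R] [LinearOrder R]
    [IsStrictOrderedRing R] {s : Finset ι} {f : ι → R} {K : R}
    (h : ∑ i ∈ s, (f i ^ 2 - f i) ≤ K) : (∑ i ∈ s, f i) ^ 2 ≤ #s * (K + ∑ i ∈ s, f i) :=
  calc (∑ i ∈ s, f i) ^ 2 ≤ #s * ∑ i ∈ s, f i ^ 2 := sq_sum_le_card_mul_sum_sq
    _ ≤ #s * (K + ∑ i ∈ s, f i) := by
        rw [sum_sub_distrib] at h
        gcongr
        linarith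

/-- Let `B` be a weakly `2`-wise balanced design over a finite set `A`, let `a = |A|`,
`b = |B|`, and let `n = ∑_{C ∈ B} |C|` be the number of incidence pairs.
Then `n² ≤ a·(b² - b + n)`. -/
theorem wbd_incidence_bound {α : Type*} [DecidableEq α]
    (A : Finset α) (B : Finset (Finset α))
    (hB : IsWeaklyBalancedDesign 2 A B) :
    ((∑ C ∈ B, C.card : ℕ) : ℤ) ^ 2 ≤
      (A.card : ℤ) * ((B.card : ℤ) ^ 2 - (B.card : ℤ) + ((∑ C ∈ B, C.card : ℕ) : ℤ)) := by
  have hpairs : ∑ x ∈ A, ((replicationNumber B x : ℤ) ^ 2 - replicationNumber B x) ≤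
      (#B : ℤ) ^ 2 - #B := by
    simp_rw [replicationNumber, ← natCast_card_offDiag, ← Nat.cast_sum]
    exact_mod_cast sum_card_offDiag_filter_mem_le A fun _ h₁ _ h₂ => hB.card_inter_le_one h₁ h₂
  rw [sum_card_eq_sum_replicationNumber hB.1, Nat.cast_sum]
  exact sq_sum_le_card_mul_of_sum_sq_sub_le hpairs
end

section
/- For every natural number n ≥ 1 there exists a simple graph G_n with exactly n vertices such that G_n is triangle-free and its independence number satisfies α(G_n) ≤ 48·2^{1/3}·n^{2/3}. -/
theorem indepNum_le_of_forall_card_le {V : Type*} {G : SimpleGraph V} {k : ℕ}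
    (h : ∀ s : Finset V, (∀ x ∈ s, ∀ y ∈ s, ¬ G.Adj x y) → s.card ≤ k) :
    indepNum G ≤ k :=
  csSup_le' <| by rintro _ ⟨s, rfl, hs⟩; exact h s hs

theorem SimpleGraph.fromRel_cliqueFree_three {V α : Type*} [LinearOrder α] {r : V → V → Prop}
    (key : V → α) (hr : ∀ a b, r a b → key a < key b)
    (h : ∀ a b c, r a b → r b c → ¬ r a c) :
    (fromRel r).CliqueFree 3 := by
  classical
  have adj_iff {a b} (hab : key a < key b) : (fromRel r).Adj a b ↔ r a b :=
    ⟨fun h' => h'.2.resolve_right fun hba => (hr b a hba).not_gt hab,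
      fun h' => ⟨fun e => (e ▸ hab).false, .inl h'⟩⟩
  have key_ne {a b} (hab : (fromRel r).Adj a b) : key a ≠ key b := by
    rcases hab.2 with h' | h'
    · exact (hr a b h').ne
    · exact (hr b a h').ne'
  intro s hs
  obtain ⟨a, b, c, hab, hac, hbc, -⟩ := is3Clique_iff.1 hs
  wlog h₁ : key a < key b generalizing a b c
  · exact this b a c hab.symm hbc hac ((key_ne hab).symm.lt_of_le (not_lt.1 h₁))
  wlog h₂ : key b < key c generalizing a b c
  · rcases lt_or_gt_of_ne (key_ne hac) with h₃ | h₃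
    · exact this a c b hac hab hbc.symm h₃ ((key_ne hbc).symm.lt_of_le (not_lt.1 h₂))
    · exact this c a b hac.symm hbc.symm hab h₃ h₁
  exact h a b c ((adj_iff h₁).1 hab) ((adj_iff h₂).1 hbc) ((adj_iff (h₁.trans h₂)).1 hac)

section IncidencePair

variable {α β : Type*} (I : α → β → Prop)

abbrev IncidencePair := {f : α × β // I f.1 f.2}

variable [LinearOrder α]

def IncidencePair.Rel (f g : IncidencePair I) : Prop :=
  f.1.1 < g.1.1 ∧ f.1.2 ≠ g.1.2 ∧ I f.1.1 g.1.2

def incidencePairGraph : SimpleGraph (IncidencePair I) :=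
  SimpleGraph.fromRel (IncidencePair.Rel I)

variable {I}

theorem IncidencePair.Rel.adj {f g : IncidencePair I} (h : IncidencePair.Rel I f g) :
    (incidencePairGraph I).Adj f g :=
  ⟨ne_of_apply_ne (fun f : IncidencePair I => f.1.1) h.1.ne, .inl h⟩

theorem incidencePairGraph_cliqueFree_three
    (hI : ∀ x y C D, x ≠ y → I x C → I y C → I x D → I y D → C = D) :
    (incidencePairGraph I).CliqueFree 3 :=
  SimpleGraph.fromRel_cliqueFree_three (fun f : IncidencePair I => f.1.1) (fun _ _ h => h.1)
    fun _ b _ hab hbc hac => hbc.2.1 (hI _ _ _ _ hab.1.ne hab.2.2 b.2 hac.2.2 hbc.2.2)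

theorem incidencePairGraph_card_le_of_indep [Fintype α] [Fintype β]
    (s : Finset (IncidencePair I))
    (hs : ∀ f ∈ s, ∀ g ∈ s, ¬ (incidencePairGraph I).Adj f g) :
    s.card ≤ Fintype.card α + Fintype.card β := by
  classical
  set Shared : IncidencePair I → Prop := fun f => ∃ g ∈ s, g.1.1 = f.1.1 ∧ g.1.2 ≠ f.1.2
  have ext {f g : IncidencePair I} (h₁ : f.1.1 = g.1.1) (h₂ : f.1.2 = g.1.2) : f = g :=
    Subtype.ext (Prod.ext h₁ h₂)
  have not_shared {f g : IncidencePair I} (hg : g ∈ s) (hC : f.1.2 = g.1.2)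
      (hfg : f.1.1 < g.1.1) : ¬ Shared f := by
    rintro ⟨h, hh, hx, hD⟩
    exact hs h hh g hg (IncidencePair.Rel.adj ⟨hx ▸ hfg, hC ▸ hD, hx ▸ hC ▸ f.2⟩)
  rw [← Finset.card_filter_add_card_filter_not Shared, add_comm]
  gcongr
  · refine (Finset.card_le_card_of_injOn (fun f => f.1.1) (fun _ _ => Finset.mem_univ _)
      ?_).trans_eq Finset.card_univ
    intro f hf g hg (hx : f.1.1 = g.1.1)
    simp only [Finset.mem_coe, Finset.mem_filter] at hf hg
    by_contra hne
    exact hf.2 ⟨g, hg.1, hx.symm, fun hC => hne (ext hx hC.symm)⟩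
  · refine (Finset.card_le_card_of_injOn (fun f => f.1.2) (fun _ _ => Finset.mem_univ _)
      ?_).trans_eq Finset.card_univ
    intro f hf g hg (hC : f.1.2 = g.1.2)
    simp only [Finset.mem_coe, Finset.mem_filter] at hf hg
    by_contra hne
    rcases lt_or_gt_of_ne fun hx => hne (ext hx hC) with hfg | hgf
    · exact not_shared hg.1 hC hfg hf.2
    · exact not_shared hf.1 hC.symm hgf hg.2

end IncidencePair

section AffinePlane

variable (K : Type*) [CommRing K]

/-- `L = (a, b)` encodes the non-vertical line `y = a * x + b`. -/
def OnLine (P L : K × K) : Prop := P.2 = L.1 * P.1 + L.2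

variable {K}

theorem OnLine.eq_of_ne [IsDomain K] {P Q L M : K × K} (hPQ : P ≠ Q) (hPL : OnLine K P L)
    (hQL : OnLine K Q L) (hPM : OnLine K P M) (hQM : OnLine K Q M) : L = M := by
  unfold OnLine at *
  by_cases hslope : L.1 = M.1
  · exact Prod.ext hslope (by rw [hslope] at hPL; linear_combination hPM - hPL)
  · have hx : P.1 = Q.1 := mul_left_cancel₀ (sub_ne_zero.2 hslope)
      (by linear_combination hPM - hPL + hQL - hQM)
    exact absurd (Prod.ext hx (by rw [hPL, hQL, hx])) hPQ

variable (K)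

def incidencePairEquiv : K × K × K ≃ IncidencePair (OnLine K) where
  toFun v := ⟨((v.1, v.2.1 * v.1 + v.2.2), v.2), rfl⟩
  invFun f := (f.1.1.1, f.1.2)
  left_inv _ := rfl
  right_inv := by
    rintro ⟨⟨⟨x, y⟩, a, b⟩, h⟩
    obtain rfl : y = a * x + b := h
    rfl

end AffinePlane

theorem exists_cliqueFree_three_indepNum_le (K : Type*) [CommRing K] [IsDomain K] [Fintype K]
    (n : ℕ) (hn : n ≤ Fintype.card K ^ 3) :
    ∃ G : SimpleGraph (Fin n), G.CliqueFree 3 ∧ indepNum G ≤ 2 * Fintype.card K ^ 2 := by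
  classical
  let : LinearOrder (K × K) := LinearOrder.lift' (Fintype.equivFin _) (Equiv.injective _)
  obtain ⟨e⟩ : Nonempty (Fin n ↪ K × K × K) :=
    Function.Embedding.nonempty_of_card_le (by simpa [pow_succ, mul_assoc] using hn)
  set e' := e.trans (incidencePairEquiv K).toEmbedding
  refine ⟨(incidencePairGraph (OnLine K)).comap e',
    (incidencePairGraph_cliqueFree_three fun _ _ _ _ => OnLine.eq_of_ne).comap
      ⟨(SimpleGraph.Embedding.comap e' _).toCopy⟩,
    indepNum_le_of_forall_card_le fun s hs => ?_⟩
  have := incidencePairGraph_card_le_of_indep (s.map e') (by simpa using hs)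
  simpa [two_mul, sq] using this

theorem exists_prime_lt_le_four_mul {x : ℝ} (hx : 1 ≤ x) :
    ∃ p : ℕ, p.Prime ∧ x < p ∧ (p : ℝ) ≤ 4 * x := by
  obtain ⟨p, hp, hxp, hpx⟩ := Nat.exists_prime_lt_and_le_two_mul ⌈x⌉₊ (by positivity)
  refine ⟨p, hp, (Nat.le_ceil x).trans_lt (by exact_mod_cast hxp), ?_⟩
  have h₁ : (p : ℝ) ≤ 2 * ⌈x⌉₊ := by exact_mod_cast hpx
  have h₂ := Nat.ceil_lt_add_one (zero_le_one.trans hx)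
  linarith

/-- For every `n ≥ 1` there is a triangle-free graph `G_n` on exactly `n` vertices with
independence number at most `48·2^(1/3)·n^(2/3)`. -/
theorem exists_triangle_free_graph_small_indepNum (n : ℕ) (hn : 1 ≤ n) :
    ∃ G : SimpleGraph (Fin n), G.CliqueFree 3 ∧
      (indepNum G : ℝ) ≤ 48 * (2 : ℝ) ^ ((1 : ℝ) / 3) * (n : ℝ) ^ ((2 : ℝ) / 3) := by
  set x := (n : ℝ) ^ ((1 : ℝ) / 3)
  have hx : 1 ≤ x := Real.one_le_rpow (by exact_mod_cast hn) (by norm_num)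
  have hx_pow (k : ℕ) : x ^ k = (n : ℝ) ^ ((k : ℝ) / 3) := by
    rw [← Real.rpow_mul_natCast (Nat.cast_nonneg n)]; ring_nf
  obtain ⟨p, hp, hxp, hpx⟩ := exists_prime_lt_le_four_mul hx
  have : Fact p.Prime := ⟨hp⟩
  have hnp : n ≤ p ^ 3 := by
    have : (n : ℝ) ≤ p ^ 3 := by
      simpa [hx_pow] using pow_le_pow_left₀ (zero_le_one.trans hx) hxp.le 3
    exact_mod_cast this
  obtain ⟨G, hG, hα⟩ := exists_cliqueFree_three_indepNum_le (ZMod p) n (by rwa [ZMod.card])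
  rw [ZMod.card] at hα
  refine ⟨G, hG, ?_⟩
  have h2 : 1 ≤ (2 : ℝ) ^ ((1 : ℝ) / 3) := Real.one_le_rpow (by norm_num) (by norm_num)
  calc (indepNum G : ℝ) ≤ 2 * p ^ 2 := by exact_mod_cast hα
    _ ≤ 2 * (4 * x) ^ 2 := by gcongr
    _ = 32 * (n : ℝ) ^ ((2 : ℝ) / 3) := by rw [mul_pow, hx_pow]; norm_num; ring
    _ ≤ 48 * (2 : ℝ) ^ ((1 : ℝ) / 3) * (n : ℝ) ^ ((2 : ℝ) / 3) := by gcongr; linarith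
end
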